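/- Let p be a prime number, k a positive natural number, and ω ∈ ℂ a primitive p^k-th root of unity. Then for every polynomial f ∈ ℤ[X] with f(1) = 1, we have f(ω) ≠ 0. Consequently, unit complex numbers whose multiplicative order is a prime power belong to the set S¹_! of unit complex numbers that are not zeros of any integral Laurent polynomial taking the value 1 at 1. -/
import Mathlib

/-- If `ω` is a primitive `p^k`-th root of unity (with `p` prime and `k > 0`),
then no integer polynomial `f` with `f(1) = 1` vanishes at `ω`.
Consequently, unit complex numbers of prime power order belong to the set `S¹_!`
of unit complex numbers that are not zeros of any integral Laurent polynomial
taking the value 1 at 1 (membership can be tested on ordinary integer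
polynomials `f` with `f(1) = 1`). -/
theorem prime_power_root_of_unity_not_zero_of_eval_one_eq_one
    (p : ℕ) (hp : Nat.Prime p) (k : ℕ) (hk : 0 < k) (ω : ℂ)
    (hω : IsPrimitiveRoot ω (p ^ k)) :
    ∀ f : Polynomial ℤ, f.eval 1 = 1 → Polynomial.aeval ω f ≠ 0 := by
  intro f hf1 hf0
  have hpos : 0 < p ^ k := pow_pos hp.pos k
  have hmin : Polynomial.cyclotomic (p ^ k) ℤ = minpoly ℤ ω :=
    Polynomial.cyclotomic_eq_minpoly hω hpos
  haveI : Fact (Nat.Prime p) := ⟨hp⟩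
  have hint : IsIntegral ℤ ω := hω.isIntegral hpos
  have hdvd : minpoly ℤ ω ∣ f := minpoly.isIntegrallyClosed_dvd hint hf0
  rw [← hmin] at hdvd
  obtain ⟨g, hg⟩ := hdvd
  have : (Polynomial.cyclotomic (p ^ k) ℤ).eval 1 * g.eval 1 = 1 := by
    rw [← Polynomial.eval_mul, ← hg, hf1]
  obtain ⟨k, rfl⟩ := Nat.exists_eq_succ_of_ne_zero hk.ne'
  rw [Polynomial.eval_one_cyclotomic_prime_pow] at this
  have hdv : (p : ℤ) ∣ 1 := ⟨g.eval 1, this.symm⟩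
  have h2 : (p : ℤ) ≤ 1 := Int.le_of_dvd one_pos hdv
  have := hp.two_le
  omega
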